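/- Let f : ℝⁿ → ℝⁿ be a C¹ vector field with f(x*) = 0, J = Df(x*) = Vdiag(Λ_s,Λ_u)V⁻¹, and suppose h : ℝˡ → ℝ^{n−l} is C¹ and satisfies Λ_u h(z) + g_u(z, h(z)) = Dh(z)[Λ_s z + g_s(z, h(z))] for all z, where (g_s; g_u)(z_s,z_u) = V⁻¹(f(x* + V(z_s;z_u)) − J·V(z_s;z_u)). Then the graph {(z, h(z))} is invariant under the flow of the transformed ODE: any solution (z_s(t), z_u(t)) with z_u(0) = h(z_s(0)) satisfies z_u(t) = h(z_s(t)) for all t in its interval of existence. -/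

import Mathlib

open Matrix Set

/-- Continuous-time invariance of the graph of h. Let f be a C¹ vector field with
f(x*) = 0 and Jacobian Df(x*) = V·diag(Λ_s,Λ_u)·V⁻¹. With
(g_s;g_u)(z) = V⁻¹(f(x* + Vz)) − diag(Λ_s,Λ_u)z the nonlinear part in eigen-coordinates,
if h is C¹ and satisfies the homological PDE
Λ_u h(z) + g_u(z,h(z)) = Dh(z)[Λ_s z + g_s(z,h(z))], then any solution of the
transformed ODE starting on the graph of h stays on the graph. -/
theorem stmt_15 (l u : ℕ)
    (f : (Fin l ⊕ Fin u → ℝ) → (Fin l ⊕ Fin u → ℝ))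
    (hf : ContDiff ℝ 1 f)
    (xstar : Fin l ⊕ Fin u → ℝ) (hfix : f xstar = 0)
    (V : Matrix (Fin l ⊕ Fin u) (Fin l ⊕ Fin u) ℝ) (hV : IsUnit V)
    (Λs : Matrix (Fin l) (Fin l) ℝ) (Λu : Matrix (Fin u) (Fin u) ℝ)
    (hJ : ∀ v, fderiv ℝ f xstar v = (V * Matrix.fromBlocks Λs 0 0 Λu * V⁻¹) *ᵥ v)
    (gs : (Fin l → ℝ) → (Fin u → ℝ) → (Fin l → ℝ))
    (gu : (Fin l → ℝ) → (Fin u → ℝ) → (Fin u → ℝ))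
    (hgs : ∀ zs zu, gs zs zu = fun i =>
      (V⁻¹ *ᵥ f (xstar + V *ᵥ Sum.elim zs zu)
        - Matrix.fromBlocks Λs 0 0 Λu *ᵥ Sum.elim zs zu) (Sum.inl i))
    (hgu : ∀ zs zu, gu zs zu = fun i =>
      (V⁻¹ *ᵥ f (xstar + V *ᵥ Sum.elim zs zu)
        - Matrix.fromBlocks Λs 0 0 Λu *ᵥ Sum.elim zs zu) (Sum.inr i))
    (h : (Fin l → ℝ) → (Fin u → ℝ)) (hh : ContDiff ℝ 1 h)
    (hpde : ∀ z, Λu *ᵥ h z + gu z (h z) = fderiv ℝ h z (Λs *ᵥ z + gs z (h z)))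
    (a b : ℝ) (ha : a < 0) (hb : 0 < b)
    (zs : ℝ → (Fin l → ℝ)) (zu : ℝ → (Fin u → ℝ))
    (hode_s : ∀ t ∈ Ioo a b, HasDerivAt zs (Λs *ᵥ zs t + gs (zs t) (zu t)) t)
    (hode_u : ∀ t ∈ Ioo a b, HasDerivAt zu (Λu *ᵥ zu t + gu (zs t) (zu t)) t)
    (hinit : zu 0 = h (zs 0)) :
    ∀ t ∈ Ioo a b, zu t = h (zs t) := by

  classical
  set Φ : (Fin l ⊕ Fin u → ℝ) → (Fin l ⊕ Fin u → ℝ) :=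
    fun x => V⁻¹ *ᵥ f (xstar + V *ᵥ x) with hPhi
  -- key algebraic identity
  have key : ∀ (p : Fin l → ℝ) (q : Fin u → ℝ),
      Φ (Sum.elim p q) = Sum.elim (Λs *ᵥ p + gs p q) (Λu *ᵥ q + gu p q) := by
    intro p q
    funext j
    cases j with
    | inl i =>
      simp [hPhi, hgs p q, Matrix.fromBlocks_mulVec, Matrix.zero_mulVec]
    | inr i =>
      simp [hPhi, hgu p q, Matrix.fromBlocks_mulVec, Matrix.zero_mulVec]
  -- Φ is C¹
  have hVc : ContDiff ℝ 1 fun x : Fin l ⊕ Fin u → ℝ => V *ᵥ x := by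
    exact (LinearMap.toContinuousLinearMap V.mulVecLin).contDiff (𝕜 := ℝ) (n := 1)
  have hVic : ContDiff ℝ 1 fun x : Fin l ⊕ Fin u → ℝ => V⁻¹ *ᵥ x := by
    exact (LinearMap.toContinuousLinearMap V⁻¹.mulVecLin).contDiff (𝕜 := ℝ) (n := 1)
  have hPhic : ContDiff ℝ 1 Φ := hVic.comp (hf.comp (contDiff_const.add hVc))
  -- combined solution
  set zfull : ℝ → (Fin l ⊕ Fin u → ℝ) := fun t => Sum.elim (zs t) (zu t) with hzfull
  have hz : ∀ t ∈ Ioo a b, HasDerivAt zfull (Φ (zfull t)) t := by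
    intro t ht
    have : Φ (zfull t) = Sum.elim (Λs *ᵥ zs t + gs (zs t) (zu t))
        (Λu *ᵥ zu t + gu (zs t) (zu t)) := key (zs t) (zu t)
    rw [this, hasDerivAt_pi]
    intro j
    cases j with
    | inl i => exact hasDerivAt_pi.mp (hode_s t ht) i
    | inr i => exact hasDerivAt_pi.mp (hode_u t ht) i
  -- the graph vector field
  set w : (Fin l → ℝ) → (Fin l → ℝ) := fun y => Λs *ᵥ y + gs y (h y) with hw
  have hwc : ContDiff ℝ 1 w := by
    have h1 : ContDiff ℝ 1 fun y : Fin l → ℝ => Sum.elim y (h y) := by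
      rw [contDiff_pi]
      intro j
      cases j with
      | inl i => exact (ContinuousLinearMap.proj i : (Fin l → ℝ) →L[ℝ] ℝ).contDiff
      | inr i =>
        exact ((ContinuousLinearMap.proj i : (Fin u → ℝ) →L[ℝ] ℝ).contDiff).comp hh
    have h2 : ContDiff ℝ 1 fun y => Φ (Sum.elim y (h y)) := hPhic.comp h1
    have h3 : w = fun y => (fun i => Φ (Sum.elim y (h y)) (Sum.inl i)) := by
      funext y i
      have := congrFun (key y (h y)) (Sum.inl i)
      simpa [hw] using this.symm
    rw [h3]
    rw [contDiff_pi]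
    intro i
    exact ((ContinuousLinearMap.proj (Sum.inl i) :
      (Fin l ⊕ Fin u → ℝ) →L[ℝ] ℝ).contDiff).comp h2
  -- local propagation of the graph condition
  have hopen : ∀ t0 ∈ Ioo a b, zu t0 = h (zs t0) →
      ∀ᶠ t in nhds t0, zu t = h (zs t) := by
    intro t0 ht0 heq
    obtain ⟨y, hy0, ε, hε, hy⟩ :=
      ContDiffAt.exists_forall_mem_closedBall_exists_eq_forall_mem_Ioo_hasDerivAt₀ (hwc.contDiffAt (x := zs t0)) t0
    set Y : ℝ → (Fin l ⊕ Fin u → ℝ) := fun t => Sum.elim (y t) (h (y t)) with hYdef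
    have hYd : ∀ t ∈ Ioo (t0 - ε) (t0 + ε), HasDerivAt Y (Φ (Y t)) t := by
      intro t ht
      have hyt := hy t ht
      have hkey : Φ (Y t) = Sum.elim (Λs *ᵥ y t + gs (y t) (h (y t)))
          (Λu *ᵥ h (y t) + gu (y t) (h (y t))) := key (y t) (h (y t))
      rw [hkey, hasDerivAt_pi]
      intro j
      cases j with
      | inl i => exact hasDerivAt_pi.mp hyt i
      | inr i =>
        have hcomp : HasDerivAt (fun t => h (y t)) (fderiv ℝ h (y t) (w (y t))) t :=
          (hh.differentiable one_ne_zero (y t)).hasFDerivAt.comp_hasDerivAt t hyt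
        have heq2 : fderiv ℝ h (y t) (w (y t))
            = Λu *ᵥ h (y t) + gu (y t) (h (y t)) := by
          rw [hw]; exact (hpde (y t)).symm
        rw [heq2] at hcomp
        exact hasDerivAt_pi.mp hcomp i
    obtain ⟨K, s₀, hs₀, hlip⟩ := (hPhic.contDiffAt (x := zfull t0)).exists_lipschitzOnWith
    have hY0 : zfull t0 = Y t0 := by
      funext j
      cases j with
      | inl i => simp [hzfull, hYdef, hy0]
      | inr i => simp [hzfull, hYdef, hy0, heq]
    have ht0mem : t0 ∈ Ioo (t0 - ε) (t0 + ε) := by constructor <;> linarith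
    have hev1 : ∀ᶠ t in nhds t0, HasDerivAt zfull (Φ (zfull t)) t ∧ zfull t ∈ s₀ := by
      have hc : ContinuousAt zfull t0 := (hz t0 ht0).continuousAt
      filter_upwards [hc.eventually_mem hs₀, Ioo_mem_nhds ht0.1 ht0.2] with t hmem htab
      exact ⟨hz t htab, hmem⟩
    have hev2 : ∀ᶠ t in nhds t0, HasDerivAt Y (Φ (Y t)) t ∧ Y t ∈ s₀ := by
      have hc : ContinuousAt Y t0 := (hYd t0 ht0mem).continuousAt
      have hs₀' : s₀ ∈ nhds (Y t0) := by rw [← hY0]; exact hs₀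
      filter_upwards [hc.eventually_mem hs₀', Ioo_mem_nhds ht0mem.1 ht0mem.2] with t hmem htab
      exact ⟨hYd t htab, hmem⟩
    have heqn : zfull =ᶠ[nhds t0] Y :=
      ODE_solution_unique_of_eventually (v := fun _ => Φ) (s := fun _ => s₀)
        (Filter.Eventually.of_forall fun _ => hlip) hev1 hev2 hY0
    filter_upwards [heqn] with t hteq
    have h1 : zs t = y t := funext fun i => congrFun hteq (Sum.inl i)
    have h2 : zu t = h (y t) := funext fun i => congrFun hteq (Sum.inr i)
    rw [h2, h1]
  -- clopen / connectedness argument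
  intro t ht
  by_contra hne
  set A : Set ℝ := {t | t ∈ Ioo a b ∧ zu t = h (zs t)} with hA
  set B : Set ℝ := {t | t ∈ Ioo a b ∧ zu t ≠ h (zs t)} with hB
  have hAopen : IsOpen A := by
    rw [isOpen_iff_mem_nhds]
    rintro t0 ⟨ht0, heq⟩
    filter_upwards [hopen t0 ht0 heq, Ioo_mem_nhds ht0.1 ht0.2] with t' h1 h2
    exact ⟨h2, h1⟩
  have hBopen : IsOpen B := by
    rw [isOpen_iff_mem_nhds]
    rintro t0 ⟨ht0, hne0⟩
    have hc : ContinuousAt (fun t => zu t - h (zs t)) t0 :=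
      (hode_u t0 ht0).continuousAt.sub
        (hh.continuous.continuousAt.comp (hode_s t0 ht0).continuousAt)
    have hne0' : zu t0 - h (zs t0) ≠ 0 := sub_ne_zero.mpr hne0
    filter_upwards [hc.eventually_ne hne0', Ioo_mem_nhds ht0.1 ht0.2] with t' h1 h2
    exact ⟨h2, sub_ne_zero.mp h1⟩
  have hsub : Ioo a b ⊆ A ∪ B := by
    intro t' ht'
    by_cases hc : zu t' = h (zs t')
    · exact Or.inl ⟨ht', hc⟩
    · exact Or.inr ⟨ht', hc⟩
  obtain ⟨t', ht'⟩ := isPreconnected_Ioo (a := a) (b := b) A B hAopen hBopen hsub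
    ⟨0, ⟨ha, hb⟩, ⟨⟨ha, hb⟩, hinit⟩⟩ ⟨t, ht, ⟨ht, hne⟩⟩
  exact ht'.2.2.2 ht'.2.1.2
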